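/- arXiv:1604.03154 — 4 statements merged into one kernel-verified Lean document; each statement's English description precedes it below -/
import Mathlib

section
/- Let d be a distance on a set X that has a ≤^d-maximum element 1 (i.e. d(x,1) = 0 for all x ∈ X), let Q be a set, and equip X^Q with the supremum distance sup-d. Then for any net (f_λ) in X^Q and f ∈ X^Q: f_λ(p) →^◦ f(p) for every p ∈ Q if and only if f_λ →^◦ f with respect to sup-d. -/
open TopologicalSpace ENNReal

/-- A (possibly non-reflexive) transitive relation, used to index nets. -/
def TransRel {ι : Type} (r : ι → ι → Prop) : Prop := ∀ a b c, r a b → r b c → r a c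

/-- Directedness of the index relation of a net. -/
def DirRel {ι : Type} (r : ι → ι → Prop) : Prop := ∀ a b, ∃ c, r a c ∧ r b c

/-- `liminf` of a net of extended nonnegative reals over a directed index:
`sup_γ inf_{γ ≺ δ} a δ`. -/
noncomputable def liminfN {ι : Type} (r : ι → ι → Prop) (a : ι → ℝ≥0∞) : ℝ≥0∞ :=
  ⨆ γ, ⨅ δ, ⨅ _ : r γ δ, a δ

/-- `limsup` of a net of extended nonnegative reals over a directed index:
`inf_γ sup_{γ ≺ δ} a δ`. -/
noncomputable def limsupN {ι : Type} (r : ι → ι → Prop) (a : ι → ℝ≥0∞) : ℝ≥0∞ :=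
  ⨅ γ, ⨆ δ, ⨆ _ : r γ δ, a δ

/-- Convergence of a net in `ℝ≥0∞` to `L`. -/
def TendstoN {ι : Type} (r : ι → ι → Prop) (a : ι → ℝ≥0∞) (L : ℝ≥0∞) : Prop :=
  liminfN r a = L ∧ limsupN r a = L

/-- Convergence of a real-valued net. -/
def TendstoRN {ι : Type} (r : ι → ι → Prop) (a : ι → ℝ) (L : ℝ) : Prop :=
  ∀ ε : ℝ, 0 < ε → ∃ γ₀, ∀ γ, r γ₀ γ → |a γ - L| < ε

/-- A distance: a `[0,∞]`-valued function satisfying the triangle inequality. -/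
def IsDistance {X : Type} (d : X → X → ℝ≥0∞) : Prop :=
  ∀ x y z, d x z ≤ d x y + d y z

/-- `d`-Cauchy net: `lim_γ sup_{γ ≺ δ} d(x_γ, x_δ) = 0`. -/
def DCauchyN {ι X : Type} (r : ι → ι → Prop) (d : X → X → ℝ≥0∞) (x : ι → X) : Prop :=
  ∀ ε : ℝ≥0∞, 0 < ε → ∃ γ₀, ∀ γ δ, r γ₀ γ → r γ δ → d (x γ) (x δ) < ε

/-- `d`-dominating net: `sup_γ lim_{γ ≺ δ} d(x_γ, x_δ) = 0`. -/
def DDomN {ι X : Type} (r : ι → ι → Prop) (d : X → X → ℝ≥0∞) (x : ι → X) : Prop :=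
  ∀ γ, ∀ ε : ℝ≥0∞, 0 < ε → ∃ δ₀, r γ δ₀ ∧ ∀ δ, r δ₀ δ → d (x γ) (x δ) < ε

/-- `x_λ →^◦ l` with holes tested against points of `T`:
`liminf_λ d(x_λ, c) ≥ d(l, c)` for all `c ∈ T`. -/
def UpperConvOn {ι X : Type} (r : ι → ι → Prop) (d : X → X → ℝ≥0∞) (T : Set X)
    (x : ι → X) (l : X) : Prop :=
  ∀ c ∈ T, d l c ≤ liminfN r fun γ => d (x γ) c

/-- `x_λ →_◦ l` with holes tested against points of `T`:
`liminf_λ d(c, x_λ) ≥ d(c, l)` for all `c ∈ T`. -/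
def LowerConvOn {ι X : Type} (r : ι → ι → Prop) (d : X → X → ℝ≥0∞) (T : Set X)
    (x : ι → X) (l : X) : Prop :=
  ∀ c ∈ T, d c l ≤ liminfN r fun γ => d c (x γ)

/-- `x_λ →^◦_◦ l` with holes tested against points of `T`. -/
def BiConvOn {ι X : Type} (r : ι → ι → Prop) (d : X → X → ℝ≥0∞) (T : Set X)
    (x : ι → X) (l : X) : Prop :=
  UpperConvOn r d T x l ∧ LowerConvOn r d T x l

/-- The supremum distance on functions `Q → X`. -/
noncomputable def supD {Q X : Type} (d : X → X → ℝ≥0∞) (f g : Q → X) : ℝ≥0∞ :=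
  ⨆ p, d (f p) (g p)

/-- The upper ball topology `X^•`, generated by the balls `{x | d c x < ε}`. -/
def upperBallTop {X : Type} (d : X → X → ℝ≥0∞) : TopologicalSpace X :=
  TopologicalSpace.generateFrom {s | ∃ c, ∃ ε : ℝ≥0∞, 0 < ε ∧ s = {x | d c x < ε}}

/-- The lower ball topology `X_•`, generated by the balls `{x | d x c < ε}`. -/
def lowerBallTop {X : Type} (d : X → X → ℝ≥0∞) : TopologicalSpace X :=
  TopologicalSpace.generateFrom {s | ∃ c, ∃ ε : ℝ≥0∞, 0 < ε ∧ s = {x | d x c < ε}}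

/-- `X` is `d`-complete: every `d`-Cauchy net has a `→^◦_◦`-limit. -/
def DComplete {X : Type} (d : X → X → ℝ≥0∞) : Prop :=
  ∀ (ι : Type) (r : ι → ι → Prop) (x : ι → X), Nonempty ι → TransRel r → DirRel r →
    DCauchyN r d x → ∃ l, BiConvOn r d Set.univ x l

/-- `y` is `d`-finite: `d(y, x_λ) → d(y, l)` whenever `(x_λ)` is `d`-Cauchy and
`x_λ →^◦_◦ l`. -/
def DFinite {X : Type} (d : X → X → ℝ≥0∞) (y : X) : Prop :=
  ∀ (ι : Type) (r : ι → ι → Prop) (x : ι → X) (l : X), Nonempty ι → TransRel r → DirRel r →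
    DCauchyN r d x → BiConvOn r d Set.univ x l →
      TendstoN r (fun γ => d y (x γ)) (d y l)

/-- The `d`-finite topology `X^{F•}`, generated by upper balls with `d`-finite centres. -/
def dFiniteTop {X : Type} (d : X → X → ℝ≥0∞) : TopologicalSpace X :=
  TopologicalSpace.generateFrom
    {s | ∃ c, DFinite d c ∧ ∃ ε : ℝ≥0∞, 0 < ε ∧ s = {x | d c x < ε}}

/-!
Pointwise upper convergence gives upper convergence for `sup-d` because a supremum of
`liminf`s is at most the `liminf` of the supremum. Conversely, to test the coordinate `p`
against a hole `c`, test the whole net against the function that is `c` at `p` and the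
maximum `1` elsewhere: every other coordinate contributes `d(x, 1) = 0` to the supremum,
so its `sup-d`-distances are exactly the `d`-distances at `p`.
-/

lemma liminfN_mono {ι : Type} (r : ι → ι → Prop) {a b : ι → ℝ≥0∞} (hab : ∀ i, a i ≤ b i) :
    liminfN r a ≤ liminfN r b :=
  iSup_mono fun _ => iInf_mono fun δ => iInf_mono fun _ => hab δ

lemma le_supD {Q X : Type} (d : X → X → ℝ≥0∞) (f g : Q → X) (p : Q) :
    d (f p) (g p) ≤ supD d f g :=
  le_iSup (fun q => d (f q) (g q)) p

lemma supD_update_const {Q X : Type} [DecidableEq Q] (d : X → X → ℝ≥0∞) (one : X)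
    (hone : ∀ x, d x one = 0) (h : Q → X) (p : Q) (c : X) :
    supD d h (Function.update (fun _ => one) p c) = d (h p) c := by
  refine le_antisymm (iSup_le fun q => ?_) ?_
  · rcases eq_or_ne q p with rfl | hq
    · simp
    · simp [Function.update_of_ne hq, hone]
  · simpa using le_supD d h (Function.update (fun _ => one) p c) p

lemma UpperConvOn.supD_of_forall {ι Q X : Type} {r : ι → ι → Prop} {d : X → X → ℝ≥0∞}
    {f : ι → Q → X} {g : Q → X} (h : ∀ p, UpperConvOn r d Set.univ (fun i => f i p) (g p)) :
    UpperConvOn r (supD d) Set.univ f g := fun c _ =>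
  iSup_le fun p => (h p (c p) trivial).trans <|
    liminfN_mono r fun γ => le_supD d (f γ) c p

lemma UpperConvOn.apply_of_supD {ι Q X : Type} {r : ι → ι → Prop} {d : X → X → ℝ≥0∞}
    {one : X} (hone : ∀ x, d x one = 0) {f : ι → Q → X} {g : Q → X}
    (h : UpperConvOn r (supD d) Set.univ f g) (p : Q) :
    UpperConvOn r d Set.univ (fun i => f i p) (g p) := by
  classical
  intro c _
  have hc := h (Function.update (fun _ => one) p c) trivial
  simpa only [supD_update_const d one hone] using hc

theorem stmt1_general {X Q ι : Type} (d : X → X → ℝ≥0∞)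
    (one : X) (hone : ∀ x, d x one = 0)
    (r : ι → ι → Prop)
    (f : ι → Q → X) (g : Q → X) :
    (∀ p, UpperConvOn r d Set.univ (fun i => f i p) (g p)) ↔
      UpperConvOn r (supD d) Set.univ f g :=
  ⟨UpperConvOn.supD_of_forall, UpperConvOn.apply_of_supD hone⟩

/-- If `X` has a `≤^d`-maximum, then `f_λ(p) →^◦ f(p)` for every `p ∈ Q`
iff `f_λ →^◦ f` with respect to the supremum distance. -/
theorem stmt1 {X Q ι : Type} (d : X → X → ℝ≥0∞) (hd : IsDistance d)
    (one : X) (hone : ∀ x, d x one = 0)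
    (r : ι → ι → Prop) (hne : Nonempty ι) (htr : TransRel r) (hdir : DirRel r)
    (f : ι → Q → X) (g : Q → X) :
    (∀ p, UpperConvOn r d Set.univ (fun i => f i p) (g p)) ↔
      UpperConvOn r (supD d) Set.univ f g :=
  stmt1_general d one hone r f g
end

section
/- Let d be a distance on a set X and Y ⊆ X with X = Y^C, i.e. every x ∈ X is a →^◦_◦-limit of some d-Cauchy net in Y. Suppose that d(y, x_λ) → d(y, x) whenever y ∈ Y, (x_λ) is a d-Cauchy net with terms in Y, and x_λ →^◦_◦ x ∈ X. Then every element of Y is d-finite in X, and consequently X is d-algebraic: every x ∈ X is a →^◦_◦-limit of a d-Cauchy net of d-finite elements of X. -/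
open TopologicalSpace ENNReal

/-!
Let `y ∈ Y` and let `x` be a `d`-Cauchy net with `x →^◦_◦ l`. The lower half of `d y (x γ) → d y l`
is part of `x →_◦ l`. For the upper half, replace each `x γ` by a point `w ∈ Y` with `d w (x γ)`
small, chosen as the tail of a `Y`-net converging to `x γ` (possible as `X = Y^C`). Indexing the
choices by finite sets of test points and thresholds that grow along the new index makes `w` a
`d`-Cauchy net in `Y` with `w →^◦_◦ l`, so `d y w → d y l` by hypothesis, and the triangle
inequality `d y (x γ) ≤ d y w + d w (x γ)` transfers the bound to `x`.
-/

open Filter Topology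

section TailFilter

variable {ι : Type} {r : ι → ι → Prop}

def tailFilter (r : ι → ι → Prop) : Filter ι := ⨅ γ, 𝓟 {δ | r γ δ}

theorem eventually_rel_tailFilter (γ : ι) : ∀ᶠ δ in tailFilter r, r γ δ :=
  mem_iInf_of_mem γ (mem_principal_self _)

theorem hasBasis_tailFilter [Nonempty ι] (htr : TransRel r) (hdir : DirRel r) :
    (tailFilter r).HasBasis (fun _ => True) fun γ => {δ | r γ δ} :=
  hasBasis_iInf_principal fun a b =>
    let ⟨c, hac, hbc⟩ := hdir a b
    ⟨c, fun _ h => htr _ _ _ hac h, fun _ h => htr _ _ _ hbc h⟩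

theorem tailFilter_neBot [Nonempty ι] (htr : TransRel r) (hdir : DirRel r) :
    (tailFilter r).NeBot :=
  (hasBasis_tailFilter htr hdir).neBot_iff.2 fun {γ} _ =>
    let ⟨c, hc, _⟩ := hdir γ γ
    ⟨c, hc⟩

theorem liminfN_eq_liminf [Nonempty ι] (htr : TransRel r) (hdir : DirRel r) (a : ι → ℝ≥0∞) :
    liminfN r a = liminf a (tailFilter r) := by
  simp [(hasBasis_tailFilter htr hdir).liminf_eq_iSup_iInf, liminfN]

theorem limsupN_eq_limsup [Nonempty ι] (htr : TransRel r) (hdir : DirRel r) (a : ι → ℝ≥0∞) :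
    limsupN r a = limsup a (tailFilter r) := by
  simp [(hasBasis_tailFilter htr hdir).limsup_eq_iInf_iSup, limsupN]

theorem tendstoN_of_le_liminf_of_limsup_le [Nonempty ι] (htr : TransRel r) (hdir : DirRel r)
    {a : ι → ℝ≥0∞} {L : ℝ≥0∞} (hle : L ≤ liminf a (tailFilter r))
    (hge : limsup a (tailFilter r) ≤ L) : TendstoN r a L := by
  have := tailFilter_neBot htr hdir
  rw [TendstoN, liminfN_eq_liminf htr hdir, limsupN_eq_limsup htr hdir]
  exact ⟨le_antisymm ((liminf_le_limsup).trans hge) hle,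
    le_antisymm hge (hle.trans (liminf_le_limsup))⟩

end TailFilter

section Approximation

variable {ι X : Type} {r : ι → ι → Prop} {d : X → X → ℝ≥0∞}

theorem DCauchyN.eventually_dist_lt [Nonempty ι] (htr : TransRel r) (hdir : DirRel r)
    {x : ι → X} {l : X} (hx : DCauchyN r d x) (hl : LowerConvOn r d Set.univ x l)
    {ε : ℝ≥0∞} (hε : 0 < ε) : ∀ᶠ γ in tailFilter r, d (x γ) l < ε := by
  have := tailFilter_neBot htr hdir
  obtain ⟨ε', hε'0, hε'ε⟩ := exists_between hε
  obtain ⟨γ₀, hγ₀⟩ := hx ε' hε'0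
  filter_upwards [eventually_rel_tailFilter γ₀] with γ hγ
  calc d (x γ) l ≤ liminf (fun δ => d (x γ) (x δ)) (tailFilter r) := by
        rw [← liminfN_eq_liminf htr hdir]; exact hl _ trivial
    _ ≤ ε' := liminf_le_of_frequently_le' <| Eventually.frequently <|
        (eventually_rel_tailFilter γ).mono fun δ hδ => (hγ₀ γ δ hγ hδ).le
    _ < ε := hε'ε

/-- As `d` is not symmetric, `d v z` need not be small; the tests `S` and thresholds `C` control
`z` from the other side, at finitely many points. -/
structure IsApprox (d : X → X → ℝ≥0∞) (Y : Set X) (v : X) (δ : ℝ≥0∞) (S : Finset X)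
    (C : Finset (X × ℝ≥0∞)) (z : X) : Prop where
  mem : z ∈ Y
  dist_lt : d z v < δ
  dist_le_of_mem : ∀ s ∈ S, s ∈ Y → d s z ≤ d s v + δ
  lt_dist : ∀ p ∈ C, p.2 < d v p.1 → p.2 < d z p.1

theorem exists_isApprox {Y : Set X}
    (hYC : ∀ x : X, ∃ (ι : Type) (r : ι → ι → Prop) (y : ι → X),
      Nonempty ι ∧ TransRel r ∧ DirRel r ∧ (∀ i, y i ∈ Y) ∧
      DCauchyN r d y ∧ BiConvOn r d Set.univ y x)
    (hfin : ∀ y ∈ Y, ∀ (ι : Type) (r : ι → ι → Prop) (x : ι → X) (l : X),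
      Nonempty ι → TransRel r → DirRel r → (∀ i, x i ∈ Y) →
      DCauchyN r d x → BiConvOn r d Set.univ x l →
        TendstoN r (fun i => d y (x i)) (d y l))
    (v : X) {δ : ℝ≥0∞} (hδ : 0 < δ) (S : Finset X) (C : Finset (X × ℝ≥0∞)) :
    ∃ z, IsApprox d Y v δ S C z := by
  obtain ⟨κ, q, z, hκ, hqtr, hqdir, hzY, hzC, hzv⟩ := hYC v
  have := tailFilter_neBot hqtr hqdir
  have hS : ∀ s ∈ S, ∀ᶠ i in tailFilter q, s ∈ Y → d s (z i) ≤ d s v + δ := by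
    intro s _
    by_cases hs : s ∈ Y
    · rcases eq_or_ne (d s v) ⊤ with htop | htop
      · simp [htop]
      have hlt : limsup (fun i => d s (z i)) (tailFilter q) < d s v + δ := by
        rw [← limsupN_eq_limsup hqtr hqdir,
          (hfin s hs κ q z v hκ hqtr hqdir hzY hzC hzv).2]
        exact ENNReal.lt_add_right htop hδ.ne'
      exact (eventually_lt_of_limsup_lt hlt).mono fun i hi _ => hi.le
    · exact .of_forall fun _ h => absurd h hs
  have hC : ∀ p ∈ C, ∀ᶠ i in tailFilter q, p.2 < d v p.1 → p.2 < d (z i) p.1 := by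
    intro p _
    by_cases hp : p.2 < d v p.1
    · have hlim := hzv.1 p.1 trivial
      rw [liminfN_eq_liminf hqtr hqdir] at hlim
      exact (eventually_lt_of_lt_liminf (hp.trans_le hlim)).mono fun _ hi _ => hi
    · exact .of_forall fun _ h => absurd h hp
  obtain ⟨i, hiv, hiS, hiC⟩ := ((hzC.eventually_dist_lt hqtr hqdir hzv.2 hδ).and
    (((eventually_all_finset S).2 hS).and ((eventually_all_finset C).2 hC))).exists
  exact ⟨z i, hzY i, hiv, hiS, hiC⟩

end Approximation

structure ApproxStage (ι X : Type) where
  idx : ι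
  prec : ℕ
  tests : Finset X
  thresholds : Finset (X × ℝ≥0∞)

namespace ApproxStage

variable {ι X : Type} {r : ι → ι → Prop} {w : ApproxStage ι X → X}

instance [Nonempty ι] : Nonempty (ApproxStage ι X) :=
  ⟨⟨Classical.arbitrary ι, 0, ∅, ∅⟩⟩

/-- Adding `w a` to the test points of every later stage is what makes the net `w` Cauchy. -/
def Rel (r : ι → ι → Prop) (w : ApproxStage ι X → X) (a b : ApproxStage ι X) : Prop :=
  r a.idx b.idx ∧ a.prec < b.prec ∧ a.tests ⊆ b.tests ∧ a.thresholds ⊆ b.thresholds ∧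
    w a ∈ b.tests

theorem transRel (htr : TransRel r) : TransRel (Rel r w) := by
  rintro a b c ⟨hab₁, hab₂, hab₃, hab₄, hab₅⟩ ⟨hbc₁, hbc₂, hbc₃, hbc₄, -⟩
  exact ⟨htr _ _ _ hab₁ hbc₁, hab₂.trans hbc₂, hab₃.trans hbc₃, hab₄.trans hbc₄, hbc₃ hab₅⟩

theorem eventually_lt_prec [Nonempty ι] (n : ℕ) :
    ∀ᶠ a in tailFilter (Rel r w), n < a.prec :=
  (eventually_rel_tailFilter (⟨Classical.arbitrary ι, n, ∅, ∅⟩ : ApproxStage ι X)).mono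
    fun _ h => h.2.1

theorem eventually_mem_thresholds [Nonempty ι] (p : X × ℝ≥0∞) :
    ∀ᶠ a in tailFilter (Rel r w), p ∈ a.thresholds :=
  (eventually_rel_tailFilter (⟨Classical.arbitrary ι, 0, ∅, {p}⟩ : ApproxStage ι X)).mono
    fun _ h => h.2.2.2.1 (Finset.mem_singleton_self p)

variable [DecidableEq X]

theorem dirRel (hdir : DirRel r) : DirRel (Rel r w) := by
  intro a b
  obtain ⟨γ, haγ, hbγ⟩ := hdir a.idx b.idx
  let c : ApproxStage ι X := ⟨γ, max a.prec b.prec + 1,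
    insert (w a) (insert (w b) (a.tests ∪ b.tests)), a.thresholds ∪ b.thresholds⟩
  refine ⟨c,
    ⟨haγ, Nat.lt_succ_of_le (le_max_left _ _), ?_, Finset.subset_union_left, by simp [c]⟩,
    ⟨hbγ, Nat.lt_succ_of_le (le_max_right _ _), ?_, Finset.subset_union_right, by simp [c]⟩⟩ <;>
  intro s hs <;> simp [c, hs]

theorem map_idx_tailFilter [Nonempty ι] (htr : TransRel r) (hdir : DirRel r) :
    map idx (tailFilter (Rel r w)) = tailFilter r := by
  refine le_antisymm (fun s hs => ?_) fun s hs => ?_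
  · obtain ⟨γ, -, hγ⟩ := (hasBasis_tailFilter htr hdir).mem_iff.1 hs
    exact mem_map.2 <| (eventually_rel_tailFilter (⟨γ, 0, ∅, ∅⟩ : ApproxStage ι X)).mono
      fun a ha => hγ ha.1
  · obtain ⟨a, -, ha⟩ := (hasBasis_tailFilter (transRel htr) (dirRel hdir)).mem_iff.1 hs
    filter_upwards [eventually_rel_tailFilter a.idx] with γ hγ
    exact ha (show Rel r w a ⟨γ, a.prec + 1, insert (w a) a.tests, a.thresholds⟩ from
      ⟨hγ, Nat.lt_succ_self _, Finset.subset_insert _ _, subset_rfl, Finset.mem_insert_self _ _⟩)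

end ApproxStage

section DiagonalNet

variable {ι X : Type} {r : ι → ι → Prop} {d : X → X → ℝ≥0∞} {Y : Set X} {x : ι → X}
  {w : ApproxStage ι X → X}

theorem tendsto_dist_idx_of_isApprox [Nonempty ι]
    (hw : ∀ a, IsApprox d Y (x a.idx) (2⁻¹ ^ a.prec) a.tests a.thresholds (w a)) :
    Tendsto (fun a => d (w a) (x a.idx)) (tailFilter (ApproxStage.Rel r w)) (𝓝 0) := by
  refine ENNReal.tendsto_nhds_zero.2 fun ε hε => ?_
  obtain ⟨n, hn⟩ := ENNReal.exists_inv_two_pow_lt hε.ne'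
  filter_upwards [ApproxStage.eventually_lt_prec n] with a ha
  calc d (w a) (x a.idx) ≤ 2⁻¹ ^ a.prec := (hw a).dist_lt.le
    _ ≤ 2⁻¹ ^ n := pow_le_pow_right_of_le_one' (by norm_num) ha.le
    _ ≤ ε := hn.le

theorem dCauchyN_of_isApprox (hd : IsDistance d) (hx : DCauchyN r d x)
    (hw : ∀ a, IsApprox d Y (x a.idx) (2⁻¹ ^ a.prec) a.tests a.thresholds (w a)) :
    DCauchyN (ApproxStage.Rel r w) d w := by
  intro ε hε
  obtain ⟨ε', hε', hε'ε⟩ := exists_between hε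
  set η := ε' / 3
  have hη : 0 < η := ENNReal.div_pos hε'.ne' (by norm_num)
  obtain ⟨n, hn⟩ := ENNReal.exists_inv_two_pow_lt hη.ne'
  obtain ⟨γ₀, hγ₀⟩ := hx η hη
  refine ⟨⟨γ₀, n, ∅, ∅⟩, fun a b hab hbc => ?_⟩
  have hpow : ∀ m, n < m → (2⁻¹ : ℝ≥0∞) ^ m < η := fun m hm =>
    (pow_le_pow_right_of_le_one' (by norm_num) hm.le).trans_lt hn
  calc d (w a) (w b) ≤ d (w a) (x b.idx) + 2⁻¹ ^ b.prec :=
        (hw b).dist_le_of_mem _ hbc.2.2.2.2 (hw a).mem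
    _ ≤ d (w a) (x a.idx) + d (x a.idx) (x b.idx) + 2⁻¹ ^ b.prec := by gcongr; exact hd _ _ _
    _ < η + η + η := by
        gcongr
        · exact (hw a).dist_lt.trans (hpow _ hab.2.1)
        · exact hγ₀ _ _ hab.1 hbc.1
        · exact hpow _ (hab.2.1.trans hbc.2.1)
    _ = ε' := ENNReal.add_thirds ε'
    _ < ε := hε'ε

theorem biConvOn_of_isApprox [Nonempty ι] [DecidableEq X] (hd : IsDistance d)
    (htr : TransRel r) (hdir : DirRel r) {l : X} (hxl : BiConvOn r d Set.univ x l)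
    (hw : ∀ a, IsApprox d Y (x a.idx) (2⁻¹ ^ a.prec) a.tests a.thresholds (w a)) :
    BiConvOn (ApproxStage.Rel r w) d Set.univ w l := by
  set G := tailFilter (ApproxStage.Rel r w)
  have hidx : map ApproxStage.idx G = tailFilter r := ApproxStage.map_idx_tailFilter htr hdir
  have hup (c : X) : d l c ≤ liminf (fun a => d (x a.idx) c) G := by
    have h := hxl.1 c trivial
    rwa [liminfN_eq_liminf htr hdir, ← hidx] at h
  have hlow (c : X) : d c l ≤ liminf (fun a => d c (x a.idx)) G := by
    have h := hxl.2 c trivial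
    rwa [liminfN_eq_liminf htr hdir, ← hidx] at h
  refine ⟨fun c _ => ?_, fun c _ => ?_⟩ <;>
    rw [liminfN_eq_liminf (ApproxStage.transRel htr) (ApproxStage.dirRel hdir)]
  · refine le_of_forall_lt_imp_le_of_dense fun t ht => le_liminf_of_le (h := ?_)
    filter_upwards [eventually_lt_of_lt_liminf (ht.trans_le (hup c)),
      ApproxStage.eventually_mem_thresholds (c, t)] with a hat hac
    exact ((hw a).lt_dist _ hac hat).le
  · calc d c l ≤ liminf (fun a => d c (x a.idx)) G := hlow c
      _ ≤ liminf (fun a => d c (w a) + d (w a) (x a.idx)) G :=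
          liminf_le_liminf (.of_forall fun _ => hd _ _ _)
      _ = liminf (fun a => d c (w a)) G :=
          ENNReal.liminf_add_of_right_tendsto_zero (tendsto_dist_idx_of_isApprox hw) _

end DiagonalNet

theorem dFinite_of_mem {X : Type} {d : X → X → ℝ≥0∞} (hd : IsDistance d) {Y : Set X}
    (hYC : ∀ x : X, ∃ (ι : Type) (r : ι → ι → Prop) (y : ι → X),
      Nonempty ι ∧ TransRel r ∧ DirRel r ∧ (∀ i, y i ∈ Y) ∧
      DCauchyN r d y ∧ BiConvOn r d Set.univ y x)
    (hfin : ∀ y ∈ Y, ∀ (ι : Type) (r : ι → ι → Prop) (x : ι → X) (l : X),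
      Nonempty ι → TransRel r → DirRel r → (∀ i, x i ∈ Y) →
      DCauchyN r d x → BiConvOn r d Set.univ x l →
        TendstoN r (fun i => d y (x i)) (d y l))
    {y : X} (hy : y ∈ Y) : DFinite d y := by
  classical
  intro ι r x l hι htr hdir hx hxl
  have hprec (n : ℕ) : (0 : ℝ≥0∞) < 2⁻¹ ^ n := ENNReal.pow_pos (by norm_num) n
  choose w hw using fun a : ApproxStage ι X =>
    exists_isApprox hYC hfin (x a.idx) (hprec a.prec) a.tests a.thresholds
  set G := tailFilter (ApproxStage.Rel r w)
  have hwl := hfin y hy _ (ApproxStage.Rel r w) w l inferInstance (ApproxStage.transRel htr)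
    (ApproxStage.dirRel hdir) (fun a => (hw a).mem) (dCauchyN_of_isApprox hd hx hw)
    (biConvOn_of_isApprox hd htr hdir hxl hw)
  refine tendstoN_of_le_liminf_of_limsup_le htr hdir
    (liminfN_eq_liminf htr hdir _ ▸ hxl.2 y trivial) ?_
  calc limsup (fun γ => d y (x γ)) (tailFilter r)
      = limsup (fun a => d y (x a.idx)) G := by
        rw [← ApproxStage.map_idx_tailFilter (w := w) htr hdir]; rfl
    _ ≤ limsup (fun a => d y (w a) + d (w a) (x a.idx)) G :=
        limsup_le_limsup (.of_forall fun _ => hd _ _ _)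
    _ = limsup (fun a => d y (w a)) G :=
        ENNReal.limsup_add_of_right_tendsto_zero (tendsto_dist_idx_of_isApprox hw) _
    _ = d y l := by
        rw [← limsupN_eq_limsup (ApproxStage.transRel htr) (ApproxStage.dirRel hdir)]
        exact hwl.2

/-- if `X = Y^C` and `d(y, x_λ) → d(y, x)` whenever `y ∈ Y`, `(x_λ)` is a
`d`-Cauchy net with terms in `Y` and `x_λ →^◦_◦ x`, then every element of `Y` is
`d`-finite, and `X` is `d`-algebraic: every element of `X` is a `→^◦_◦`-limit of a
`d`-Cauchy net of `d`-finite elements. -/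
theorem stmt4 {X : Type} (d : X → X → ℝ≥0∞) (hd : IsDistance d) (Y : Set X)
    (hYC : ∀ x : X, ∃ (ι : Type) (r : ι → ι → Prop) (y : ι → X),
      Nonempty ι ∧ TransRel r ∧ DirRel r ∧ (∀ i, y i ∈ Y) ∧
      DCauchyN r d y ∧ BiConvOn r d Set.univ y x)
    (hfin : ∀ y ∈ Y, ∀ (ι : Type) (r : ι → ι → Prop) (x : ι → X) (l : X),
      Nonempty ι → TransRel r → DirRel r → (∀ i, x i ∈ Y) →
      DCauchyN r d x → BiConvOn r d Set.univ x l →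
        TendstoN r (fun i => d y (x i)) (d y l)) :
    (∀ y ∈ Y, DFinite d y) ∧
    ∀ x : X, ∃ (ι : Type) (r : ι → ι → Prop) (y : ι → X),
      Nonempty ι ∧ TransRel r ∧ DirRel r ∧ (∀ i, DFinite d (y i)) ∧
      DCauchyN r d y ∧ BiConvOn r d Set.univ y x := by
  have hY : ∀ y ∈ Y, DFinite d y := fun _ hy => dFinite_of_mem hd hYC hfin hy
  refine ⟨hY, fun x => ?_⟩
  obtain ⟨ι, r, y, hι, htr, hdir, hyY, hy, hyx⟩ := hYC x
  exact ⟨ι, r, y, hι, htr, hdir, fun i => hY _ (hyY i), hy, hyx⟩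
end

section
/- Let X be a preordered Banach space. Then X^{S1} = X^S ∩ X^{**1} is d-complete: every d-Cauchy net in X^{S1} has a →^◦_◦-limit (holes tested against all points of X^{**}) lying in X^{S1}. -/
open TopologicalSpace ENNReal

/-- The bidual `X**` of a real normed space. -/
abbrev Bidual (X : Type) [NormedAddCommGroup X] [NormedSpace ℝ X] : Type :=
  StrongDual ℝ (StrongDual ℝ X)

/-- The positive cone of a preordered Banach space: a norm-closed set containing `0`,
closed under nonnegative scaling and addition. -/
def IsGoodCone (X : Type) [NormedAddCommGroup X] [NormedSpace ℝ X] (K : Set X) : Prop :=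
  IsClosed K ∧ (0 : X) ∈ K ∧ (∀ r : ℝ, 0 ≤ r → ∀ x ∈ K, r • x ∈ K) ∧
    ∀ x ∈ K, ∀ y ∈ K, x + y ∈ K

/-- `Q = X^{*1}_+`, the positive unit ball of the dual. -/
def posQ (X : Type) [NormedAddCommGroup X] [NormedSpace ℝ X] (K : Set X) :
    Set (StrongDual ℝ X) :=
  {φ | ‖φ‖ ≤ 1 ∧ ∀ v ∈ K, 0 ≤ φ v}

/-- The canonical hemimetric on `X**`: `d(x,y) = ‖x - y‖_≤ = sup_{φ ∈ Q} φ(x - y)`. -/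
noncomputable def ddist {X : Type} [NormedAddCommGroup X] [NormedSpace ℝ X] (K : Set X)
    (x y : Bidual X) : ℝ≥0∞ :=
  ⨆ φ ∈ posQ X K, ENNReal.ofReal ((x - y) φ)

/-- The weak* topology on `Q = X^{*1}_+`. -/
def qTop (X : Type) [NormedAddCommGroup X] [NormedSpace ℝ X] (K : Set X) :
    TopologicalSpace (posQ X K) :=
  TopologicalSpace.induced (fun φ : posQ X K => fun v : X => φ.1 v) inferInstance

/-- `x ∈ X^S`: the restriction of `x ∈ X**` to `Q` is weak* lower semicontinuous. -/
def lscS {X : Type} [NormedAddCommGroup X] [NormedSpace ℝ X] (K : Set X)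
    (x : Bidual X) : Prop :=
  @LowerSemicontinuous (posQ X K) ℝ (qTop X K) _ fun φ => x φ.1

/-- `B^{<∞}`: the bounded functions `Q → X**`. -/
def Bset (X : Type) [NormedAddCommGroup X] [NormedSpace ℝ X] (Q : Type) :
    Set (Q → Bidual X) := {f | ∃ M, ∀ p, ‖f p‖ ≤ M}

/-- The upper ball topology on `X^S`, generated by the balls
`{y | d(c, y) < ε}` for `c ∈ X^S`. -/
def upTopXS {X : Type} [NormedAddCommGroup X] [NormedSpace ℝ X] (K : Set X) :
    TopologicalSpace {x : Bidual X // lscS K x} :=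
  TopologicalSpace.generateFrom
    {s | ∃ c : {x : Bidual X // lscS K x}, ∃ ε : ℝ≥0∞, 0 < ε ∧ s = {y | ddist K c.1 y.1 < ε}}

/-- `f ∈ S`: a bounded function `Q → X**` taking values in `X^S` that is continuous
into `X^S` with its upper ball topology. -/
def MemS {X : Type} [NormedAddCommGroup X] [NormedSpace ℝ X] (K : Set X)
    {Q : Type} [TopologicalSpace Q] (f : Q → Bidual X) : Prop :=
  f ∈ Bset X Q ∧ ∃ h : ∀ p, lscS K (f p),
    @Continuous Q {x : Bidual X // lscS K x} _ (upTopXS K) fun p => ⟨f p, h p⟩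


/-!
By Banach–Alaoglu the net has a weak* cluster point `l` in the unit ball of `X**`. For `φ ∈ Q`
the `d`-Cauchy condition says that `x_γ φ - x_δ φ` is eventually small for `γ ≺ δ`, so the
bounded real net `x_γ φ` converges, necessarily to `l φ`. Passing to the limit in `δ` gives
`x_γ ≤ l + ε` on all of `Q` for late `γ`, which makes `l|_Q` lower semicontinuous, and
pointwise convergence on `Q` yields both lower bounds on `liminf d(x_γ, c)` and `liminf d(c, x_γ)`.
-/

open Filter Topology

section SectionFilter

variable {ι : Type} {r : ι → ι → Prop}

variable (r) in
def sectionFilter : Filter ι := ⨅ γ, 𝓟 {δ | r γ δ}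

theorem directed_principal_sections (htr : TransRel r) (hdir : DirRel r) :
    Directed (· ≥ ·) fun γ => 𝓟 {δ | r γ δ} := by
  intro γ δ
  obtain ⟨c, hγc, hδc⟩ := hdir γ δ
  exact ⟨c, principal_mono.2 fun e he => htr _ _ _ hγc he,
    principal_mono.2 fun e he => htr _ _ _ hδc he⟩

theorem mem_sectionFilter [Nonempty ι] (htr : TransRel r) (hdir : DirRel r) {s : Set ι} :
    s ∈ sectionFilter r ↔ ∃ γ, {δ | r γ δ} ⊆ s := by
  simp only [sectionFilter, mem_iInf_of_directed (directed_principal_sections htr hdir),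
    mem_principal]

theorem sections_mem_sectionFilter (γ : ι) : {δ | r γ δ} ∈ sectionFilter r :=
  mem_iInf_of_mem γ (mem_principal_self _)

theorem sections_nonempty (hdir : DirRel r) (γ : ι) : {δ | r γ δ}.Nonempty :=
  (hdir γ γ).imp fun _ h => h.1

theorem sectionFilter_neBot [Nonempty ι] (htr : TransRel r) (hdir : DirRel r) :
    (sectionFilter r).NeBot :=
  iInf_neBot_of_directed' (directed_principal_sections htr hdir) fun γ =>
    principal_neBot_iff.2 (sections_nonempty hdir γ)

theorem le_liminfN_of_tendsto [Nonempty ι] (htr : TransRel r) (hdir : DirRel r)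
    {f b : ι → ℝ≥0∞} {L : ℝ≥0∞} (hf : Tendsto f (sectionFilter r) (𝓝 L))
    (hfb : ∀ δ, f δ ≤ b δ) : L ≤ liminfN r b := by
  refine le_of_forall_lt_imp_le_of_dense fun a ha => ?_
  obtain ⟨γ, hγ⟩ := (mem_sectionFilter htr hdir).1 (hf.eventually (lt_mem_nhds ha))
  exact le_iSup_of_le γ (le_iInf₂ fun δ hδ => (hγ hδ).le.trans (hfb δ))

theorem exists_tendsto_sectionFilter_of_sub_lt [Nonempty ι] (htr : TransRel r)
    (hdir : DirRel r) {f : ι → ℝ} (hbdd : BddAbove (Set.range f))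
    (hC : ∀ ε > 0, ∃ γ₀, ∀ γ δ, r γ₀ γ → r γ δ → f γ - f δ < ε) :
    ∃ L, Tendsto f (sectionFilter r) (𝓝 L) := by
  have := sectionFilter_neBot htr hdir
  refine cauchy_map_iff_exists_tendsto.1 (Metric.cauchy_iff.2 ⟨map_neBot, fun ε hε => ?_⟩)
  obtain ⟨γ₀, hγ₀⟩ := hC (ε / 2) (half_pos hε)
  set s := sSup (f '' {δ | r γ₀ δ})
  have hs : ∀ δ, r γ₀ δ → f δ ≤ s := fun δ hδ =>
    le_csSup (hbdd.mono (Set.image_subset_range _ _)) ⟨δ, hδ, rfl⟩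
  obtain ⟨_, ⟨γ₁, hγ₁, rfl⟩, hγ₁s⟩ := exists_lt_of_lt_csSup
    ((sections_nonempty hdir γ₀).image f) (sub_lt_self s (half_pos hε))
  have htail : ∀ δ, r γ₁ δ → s - ε < f δ ∧ f δ ≤ s := fun δ hδ =>
    ⟨by linarith [hγ₀ γ₁ δ hγ₁ hδ], hs δ (htr _ _ _ hγ₁ hδ)⟩
  refine ⟨f '' {δ | r γ₁ δ}, image_mem_map (sections_mem_sectionFilter γ₁), ?_⟩
  rintro _ ⟨δ, hδ, rfl⟩ _ ⟨δ', hδ', rfl⟩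
  obtain ⟨h₁, h₂⟩ := htail δ hδ
  obtain ⟨h₃, h₄⟩ := htail δ' hδ'
  rw [Real.dist_eq, abs_sub_lt_iff]
  constructor <;> linarith

end SectionFilter

theorem lowerSemicontinuous_of_forall_approx {α : Type*} [TopologicalSpace α] {g : α → ℝ}
    (h : ∀ p, ∀ ε > 0, ∃ f : α → ℝ,
      LowerSemicontinuous f ∧ (∀ q, f q ≤ g q + ε) ∧ g p < f p + ε) :
    LowerSemicontinuous g := by
  intro p t ht
  obtain ⟨f, hf, hfg, hpf⟩ := h p ((g p - t) / 3) (by linarith)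
  filter_upwards [hf p (g p - 2 * ((g p - t) / 3)) (by linarith)] with q hq
  linarith [hfg q]

theorem StrongDual.exists_norm_le_eq_of_tendsto_apply {𝕜 E ι : Type*}
    [NontriviallyNormedField 𝕜] [ProperSpace 𝕜] [SeminormedAddCommGroup E] [NormedSpace 𝕜 E]
    {F : Filter ι} [F.NeBot] {x : ι → StrongDual 𝕜 E} {R : ℝ} (hx : ∀ i, ‖x i‖ ≤ R) :
    ∃ l : StrongDual 𝕜 E, ‖l‖ ≤ R ∧
      ∀ v L, Tendsto (fun i => x i v) F (𝓝 L) → l v = L := by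
  have hball : map (StrongDual.toWeakDual ∘ x) F ≤
      𝓟 (WeakDual.toStrongDual ⁻¹' Metric.closedBall 0 R) :=
    le_principal_iff.2 <| mem_map.2 <| univ_mem' fun i => mem_closedBall_zero_iff.2 (hx i)
  obtain ⟨l, hl, hcl⟩ := WeakDual.isCompact_closedBall (0 : StrongDual 𝕜 E) R hball
  refine ⟨WeakDual.toStrongDual l, mem_closedBall_zero_iff.1 hl, fun v L hL => ?_⟩
  exact eq_of_nhds_neBot <|
    hcl.map (WeakDual.eval_continuous v).continuousAt (tendsto_map'_iff.2 hL)

section Hemimetric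

variable {X : Type} [NormedAddCommGroup X] [NormedSpace ℝ X] {K : Set X}

theorem ofReal_apply_sub_le_ddist {x y : Bidual X} {φ : StrongDual ℝ X} (hφ : φ ∈ posQ X K) :
    ENNReal.ofReal ((x - y) φ) ≤ ddist K x y :=
  le_iSup₂ (f := fun φ (_ : φ ∈ posQ X K) => ENNReal.ofReal ((x - y) φ)) φ hφ

variable {ι : Type} {r : ι → ι → Prop} {x : ι → Bidual X}

theorem DCauchyN.apply_sub_lt (hC : DCauchyN r (ddist K) x) {ε : ℝ} (hε : 0 < ε) :
    ∃ γ₀, ∀ γ δ, r γ₀ γ → r γ δ → ∀ φ ∈ posQ X K, x γ φ - x δ φ < ε := by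
  obtain ⟨γ₀, hγ₀⟩ := hC _ (ENNReal.ofReal_pos.2 hε)
  exact ⟨γ₀, fun γ δ hγ hδ φ hφ => (ENNReal.ofReal_lt_ofReal_iff hε).1
    ((ofReal_apply_sub_le_ddist hφ).trans_lt (hγ₀ γ δ hγ hδ))⟩

theorem DCauchyN.exists_tendsto_apply [Nonempty ι] (htr : TransRel r) (hdir : DirRel r)
    (hC : DCauchyN r (ddist K) x) {R : ℝ} (hx : ∀ i, ‖x i‖ ≤ R)
    {φ : StrongDual ℝ X} (hφ : φ ∈ posQ X K) :
    ∃ L, Tendsto (fun γ => x γ φ) (sectionFilter r) (𝓝 L) :=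
  exists_tendsto_sectionFilter_of_sub_lt htr hdir
    ⟨R * ‖φ‖, Set.forall_mem_range.2 fun i =>
      (Real.le_norm_self _).trans ((x i).le_of_opNorm_le (hx i) φ)⟩
    fun _ hε => (hC.apply_sub_lt hε).imp fun _ h γ δ hγ hδ => h γ δ hγ hδ φ hφ

variable {l : Bidual X}

theorem lscS_of_tendsto [Nonempty ι] (htr : TransRel r) (hdir : DirRel r)
    (hx : ∀ i, lscS K (x i)) (hC : DCauchyN r (ddist K) x)
    (hconv : ∀ φ ∈ posQ X K, Tendsto (fun γ => x γ φ) (sectionFilter r) (𝓝 (l φ))) :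
    lscS K l := by
  have := sectionFilter_neBot htr hdir
  let := qTop X K
  refine lowerSemicontinuous_of_forall_approx fun φ₀ ε hε => ?_
  obtain ⟨γ₀, hγ₀⟩ := hC.apply_sub_lt hε
  have hlate : ∀ᶠ δ in sectionFilter r, r γ₀ δ := sections_mem_sectionFilter γ₀
  obtain ⟨γ, hγ₀γ, hγ⟩ :=
    (hlate.and ((hconv φ₀.1 φ₀.2).eventually (lt_mem_nhds (sub_lt_self _ hε)))).exists
  have hdom : ∀ φ ∈ posQ X K, x γ φ ≤ l φ + ε := fun φ hφ => by
    have := ge_of_tendsto (hconv φ hφ) <| mem_of_superset (sections_mem_sectionFilter γ)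
      fun δ hδ => (by linarith [hγ₀ γ δ hγ₀γ hδ φ hφ] : x γ φ - ε ≤ x δ φ)
    linarith
  exact ⟨fun φ => x γ φ.1, hx γ, fun φ => hdom φ.1 φ.2, by linarith⟩

theorem biConvOn_ddist_of_tendsto [Nonempty ι] (htr : TransRel r) (hdir : DirRel r)
    (hconv : ∀ φ ∈ posQ X K, Tendsto (fun γ => x γ φ) (sectionFilter r) (𝓝 (l φ))) :
    BiConvOn r (ddist K) Set.univ x l :=
  ⟨fun c _ => iSup₂_le fun φ hφ => le_liminfN_of_tendsto htr hdir
      (ENNReal.tendsto_ofReal ((hconv φ hφ).sub_const (c φ)))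
      fun _ => ofReal_apply_sub_le_ddist hφ,
    fun c _ => iSup₂_le fun φ hφ => le_liminfN_of_tendsto htr hdir
      (ENNReal.tendsto_ofReal ((hconv φ hφ).const_sub (c φ)))
      fun _ => ofReal_apply_sub_le_ddist hφ⟩

end Hemimetric

theorem stmt6_general (X : Type) [NormedAddCommGroup X] [NormedSpace ℝ X]
    (K : Set X)
    (ι : Type) (r : ι → ι → Prop) (x : ι → Bidual X)
    (hne : Nonempty ι) (htr : TransRel r) (hdir : DirRel r)
    (hx : ∀ i, lscS K (x i) ∧ ‖x i‖ ≤ 1)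
    (hC : DCauchyN r (ddist K) x) :
    ∃ l : Bidual X, lscS K l ∧ ‖l‖ ≤ 1 ∧ BiConvOn r (ddist K) Set.univ x l := by
  have := sectionFilter_neBot htr hdir
  obtain ⟨l, hl_norm, hl_lim⟩ :=
    StrongDual.exists_norm_le_eq_of_tendsto_apply (F := sectionFilter r) fun i => (hx i).2
  have hconv : ∀ φ ∈ posQ X K, Tendsto (fun γ => x γ φ) (sectionFilter r) (𝓝 (l φ)) := by
    intro φ hφ
    obtain ⟨L, hL⟩ := hC.exists_tendsto_apply htr hdir (fun i => (hx i).2) hφ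
    rwa [hl_lim φ L hL]
  exact ⟨l, lscS_of_tendsto htr hdir (fun i => (hx i).1) hC hconv, hl_norm,
    biConvOn_ddist_of_tendsto htr hdir hconv⟩

/-- `X^{S1} = X^S ∩ X^{**1}` is `d`-complete: every `d`-Cauchy net in
`X^{S1}` has a `→^◦_◦`-limit (holes tested against all of `X**`) lying in `X^{S1}`. -/
theorem stmt6 (X : Type) [NormedAddCommGroup X] [NormedSpace ℝ X] [CompleteSpace X]
    (K : Set X) (hK : IsGoodCone X K)
    (ι : Type) (r : ι → ι → Prop) (x : ι → Bidual X)
    (hne : Nonempty ι) (htr : TransRel r) (hdir : DirRel r)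
    (hx : ∀ i, lscS K (x i) ∧ ‖x i‖ ≤ 1)
    (hC : DCauchyN r (ddist K) x) :
    ∃ l : Bidual X, lscS K l ∧ ‖l‖ ≤ 1 ∧ BiConvOn r (ddist K) Set.univ x l :=
  stmt6_general X K ι r x hne htr hdir hx hC
end

section
/- Let X be a preordered Banach space. Then every x in the unit ball X^1 of X is d-finite in X^{S1}: whenever (y_λ) is a d-Cauchy net with terms in X^{S1} = X^S ∩ X^{**1} and y_λ →^◦_◦ y with y ∈ X^{S1} (holes tested against all points of X^{**}), we have d(x, y_λ) → d(x, y). -/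
open TopologicalSpace ENNReal

/-!
The bound `d(x, l) ≤ liminf d(x, y_λ)` is the hypothesis `y_λ →_◦ l`. For the other one, suppose
`d(x, y_λ) > t` cofinally, witnessed by functionals `φ_μ ∈ Q`. Along an ultrafilter finer than the
tails of the net, the `φ_μ` converge weak* to some `ψ ∈ Q` and the `y_λ` converge weak* to some
`c ∈ X**` (Banach–Alaoglu). As `x ∈ X` is weak* continuous on `Q` and every `y_ν` is lower
semicontinuous there, the Cauchy condition passes to the limit: `ψ(x) - c(ψ) ≥ t - ε` and
`d(y_ν, c) ≤ ε` on a tail. Now `y_λ →^◦ l` gives `d(l, c) ≤ ε`, and `d(x, c) ≤ d(x, l) + d(l, c)`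
yields `t ≤ d(x, l) + 2ε`.
-/

open Filter Topology

section Nets

variable {ι : Type} {r : ι → ι → Prop}

theorem liminfN_le_limsupN (hdir : DirRel r) (a : ι → ℝ≥0∞) : liminfN r a ≤ limsupN r a :=
  iSup_le fun γ => le_iInf fun ν => by
    obtain ⟨δ, hγδ, hνδ⟩ := hdir γ ν
    exact (iInf₂_le δ hγδ).trans (le_iSup₂ (f := fun δ (_ : r ν δ) => a δ) δ hνδ)

theorem tendstoN_of_le_liminfN_of_limsupN_le (hdir : DirRel r) {a : ι → ℝ≥0∞} {L : ℝ≥0∞}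
    (hlow : L ≤ liminfN r a) (hup : limsupN r a ≤ L) : TendstoN r a L :=
  have h := liminfN_le_limsupN hdir a
  ⟨le_antisymm (h.trans hup) hlow, le_antisymm hup (hlow.trans h)⟩

theorem liminfN_le_of_tail_le (hdir : DirRel r) {a : ι → ℝ≥0∞} {b : ℝ≥0∞} {γ₀ : ι}
    (h : ∀ γ, r γ₀ γ → a γ ≤ b) : liminfN r a ≤ b :=
  iSup_le fun γ => by
    obtain ⟨δ, hγδ, hγ₀δ⟩ := hdir γ γ₀
    exact (iInf₂_le δ hγδ).trans (h δ hγ₀δ)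

theorem exists_lt_of_lt_limsupN {a : ι → ℝ≥0∞} {b : ℝ≥0∞} (h : b < limsupN r a) (γ : ι) :
    ∃ δ, r γ δ ∧ b < a δ := by
  simpa only [lt_iSup_iff, exists_prop] using h.trans_le (iInf_le _ γ)

theorem exists_ultrafilter_forall_tail_mem (hne : Nonempty ι) (htr : TransRel r)
    (hdir : DirRel r) : ∃ 𝒰 : Ultrafilter ι, ∀ γ, {δ | r γ δ} ∈ 𝒰 := by
  have hdirected : Directed (· ≥ ·) fun γ => 𝓟 {δ | r γ δ} := fun γ₁ γ₂ => by
    obtain ⟨δ, h₁, h₂⟩ := hdir γ₁ γ₂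
    exact ⟨δ, principal_mono.2 fun _ => htr _ _ _ h₁, principal_mono.2 fun _ => htr _ _ _ h₂⟩
  have : NeBot (⨅ γ, 𝓟 {δ | r γ δ}) := iInf_neBot_of_directed hdirected fun γ =>
    principal_neBot_iff.2 ((hdir γ γ).imp fun _ h => h.1)
  exact ⟨Ultrafilter.of _, fun γ => Ultrafilter.of_le _ (mem_iInf_of_mem γ (mem_principal_self _))⟩

end Nets

-- The topology on `α` is implicit so that the lemma applies to `qTop`, which is not an instance.
theorem LowerSemicontinuousAt.le_of_tendsto_of_eventually_le {ι α β : Type*}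
    {_ : TopologicalSpace α} [LinearOrder β] [TopologicalSpace β] [OrderTopology β]
    [DenselyOrdered β] {f : α → β} {p : α} (hf : LowerSemicontinuousAt f p) {F : Filter ι}
    [F.NeBot] {u : ι → α} {g : ι → β} {b : β} (hu : Tendsto u F (𝓝 p)) (hg : Tendsto g F (𝓝 b))
    (h : ∀ᶠ i in F, f (u i) ≤ g i) : f p ≤ b := by
  by_contra! hlt
  obtain ⟨t, hbt, htf⟩ := exists_between hlt
  obtain ⟨i, hti, hgi, hfg⟩ :=
    ((hu.eventually (hf t htf)).and ((hg.eventually (gt_mem_nhds hbt)).and h)).exists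
  exact (hti.trans_le hfg).not_gt hgi

theorem exists_tendsto_apply_of_norm_le {E ι : Type*} [NormedAddCommGroup E] [NormedSpace ℝ E]
    (𝒰 : Ultrafilter ι) (g : ι → StrongDual ℝ E) {C : ℝ} (hg : ∀ i, ‖g i‖ ≤ C) :
    ∃ c : StrongDual ℝ E, ‖c‖ ≤ C ∧ ∀ v, Tendsto (fun i => g i v) 𝒰 (𝓝 (c v)) := by
  obtain ⟨c, hc, hlim⟩ := (WeakDual.isCompact_closedBall (𝕜 := ℝ) (0 : StrongDual ℝ E) C)
    |>.ultrafilter_le_nhds (𝒰.map fun i => StrongDual.toWeakDual (g i)) <| by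
      rw [Ultrafilter.coe_map, le_principal_iff, mem_map]
      exact univ_mem' fun i => by simpa using hg i
  exact ⟨WeakDual.toStrongDual c, by simpa using hc,
    fun v => ((WeakDual.eval_continuous v).tendsto c).comp hlim⟩

section Hemimetric

variable {X : Type} [NormedAddCommGroup X] [NormedSpace ℝ X] {K : Set X}

theorem ofReal_apply_le_ddist {u w : Bidual X} {φ : StrongDual ℝ X} (hφ : φ ∈ posQ X K) :
    ENNReal.ofReal ((u - w) φ) ≤ ddist K u w :=
  le_iSup₂ (f := fun φ (_ : φ ∈ posQ X K) => ENNReal.ofReal ((u - w) φ)) φ hφ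

theorem ddist_le_ofReal_iff {u w : Bidual X} {s : ℝ} (hs : 0 ≤ s) :
    ddist K u w ≤ ENNReal.ofReal s ↔ ∀ φ ∈ posQ X K, (u - w) φ ≤ s :=
  ⟨fun h _ hφ => (ENNReal.ofReal_le_ofReal_iff hs).1 ((ofReal_apply_le_ddist hφ).trans h),
    fun h => iSup₂_le fun φ hφ => ENNReal.ofReal_le_ofReal (h φ hφ)⟩

theorem exists_lt_apply_of_lt_ddist {u w : Bidual X} {t : ℝ}
    (h : ENNReal.ofReal t < ddist K u w) : ∃ φ ∈ posQ X K, t < (u - w) φ := by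
  obtain ⟨φ, hφ, h⟩ := lt_biSup_iff.1 h
  exact ⟨φ, hφ, (ENNReal.ofReal_lt_ofReal_iff'.1 h).1⟩

theorem isDistance_ddist : IsDistance (ddist K) := fun u v w =>
  iSup₂_le fun φ hφ => calc
    ENNReal.ofReal ((u - w) φ) = ENNReal.ofReal ((u - v) φ + (v - w) φ) := by
      simp only [sub_apply, sub_add_sub_cancel]
    _ ≤ ENNReal.ofReal ((u - v) φ) + ENNReal.ofReal ((v - w) φ) := ENNReal.ofReal_add_le
    _ ≤ ddist K u v + ddist K v w :=
      add_le_add (ofReal_apply_le_ddist hφ) (ofReal_apply_le_ddist hφ)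

theorem tendsto_qTop_iff {ι : Type*} {F : Filter ι} {φ : ι → posQ X K} {ψ : posQ X K} :
    Tendsto φ F (@nhds _ (qTop X K) ψ) ↔ ∀ v, Tendsto (fun i => (φ i).1 v) F (𝓝 (ψ.1 v)) := by
  rw [show @nhds _ (qTop X K) ψ = comap _ _ from nhds_induced _ ψ, tendsto_comap_iff,
    tendsto_pi_nhds]
  rfl

theorem exists_tendsto_posQ {ι : Type*} (𝒰 : Ultrafilter ι) (φ : ι → posQ X K) :
    ∃ ψ : posQ X K, Tendsto φ 𝒰 (@nhds _ (qTop X K) ψ) := by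
  obtain ⟨ψ, hψ, hlim⟩ := exists_tendsto_apply_of_norm_le 𝒰 (fun i => (φ i).1) fun i => (φ i).2.1
  exact ⟨⟨ψ, hψ, fun v hv => ge_of_tendsto (hlim v) (.of_forall fun i => (φ i).2.2 v hv)⟩,
    tendsto_qTop_iff.2 hlim⟩

end Hemimetric

section Finiteness

variable {X : Type} [NormedAddCommGroup X] [NormedSpace ℝ X] {K : Set X}
  {ι : Type} {r : ι → ι → Prop} {y : ι → Bidual X} {C : ℝ}

open NormedSpace

theorem exists_tail_close_far_of_lt_limsupN (x : X) (hne : Nonempty ι) (htr : TransRel r)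
    (hdir : DirRel r) (hlsc : ∀ i, lscS K (y i)) (hbdd : ∀ i, ‖y i‖ ≤ C)
    (hC : DCauchyN r (ddist K) y) {t ε : ℝ} (hε : 0 < ε)
    (ht : ENNReal.ofReal t < limsupN r fun i => ddist K (inclusionInDoubleDual ℝ X x) (y i)) :
    ∃ c : Bidual X, ∃ γ₀, (∀ ν, r γ₀ ν → ddist K (y ν) c ≤ ENNReal.ofReal ε) ∧
      ENNReal.ofReal (t - ε) ≤ ddist K (inclusionInDoubleDual ℝ X x) c := by
  obtain ⟨γ₀, hγ₀⟩ := hC (ENNReal.ofReal ε) (ENNReal.ofReal_pos.2 hε)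
  have hcauchy : ∀ ν μ, r γ₀ ν → r ν μ → ∀ φ ∈ posQ X K, y ν φ - y μ φ ≤ ε :=
    fun ν μ hν hμ => (ddist_le_ofReal_iff hε.le).1 (hγ₀ ν μ hν hμ).le
  have hfar : ∀ μ, ∃ δ, r μ δ ∧ ∃ φ ∈ posQ X K, t < φ x - y δ φ := fun μ => by
    obtain ⟨δ, hμδ, hδ⟩ := exists_lt_of_lt_limsupN ht μ
    obtain ⟨φ, hφ, h⟩ := exists_lt_apply_of_lt_ddist hδ
    exact ⟨δ, hμδ, φ, hφ, by simpa using h⟩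
  choose δ hδ φ hφ hφt using hfar
  obtain ⟨𝒰, h𝒰⟩ := exists_ultrafilter_forall_tail_mem hne htr hdir
  obtain ⟨ψ, hψ⟩ := exists_tendsto_posQ 𝒰 fun μ => ⟨φ μ, hφ μ⟩
  have hyψ : ∀ ν, r γ₀ ν → y ν ψ ≤ ψ.1 x - (t - ε) := fun ν hν =>
    LowerSemicontinuousAt.le_of_tendsto_of_eventually_le (hlsc ν ψ) hψ
      ((tendsto_qTop_iff.1 hψ x).sub_const _) <| by
      filter_upwards [h𝒰 ν] with μ hμ
      linarith [hcauchy ν (δ μ) hν (htr _ _ _ hμ (hδ μ)) (φ μ) (hφ μ), hφt μ]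
  obtain ⟨c, -, hc⟩ := exists_tendsto_apply_of_norm_le 𝒰 y hbdd
  refine ⟨c, γ₀, fun ν hν => (ddist_le_ofReal_iff hε.le).2 fun φ hφ => ?_, ?_⟩
  · have : y ν φ - ε ≤ c φ := ge_of_tendsto (hc φ) <| by
      filter_upwards [h𝒰 ν] with μ hμ
      linarith [hcauchy ν μ hν hμ φ hφ]
    simp only [sub_apply]
    linarith
  · have hcψ : c ψ ≤ ψ.1 x - (t - ε) := le_of_tendsto (hc ψ) <| by
      filter_upwards [h𝒰 γ₀] using hyψ
    refine le_trans (ENNReal.ofReal_le_ofReal ?_) (ofReal_apply_le_ddist ψ.2)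
    simp only [sub_apply, NormedSpace.dual_def]
    linarith

theorem limsupN_ddist_le (x : X) (hne : Nonempty ι) (htr : TransRel r) (hdir : DirRel r)
    (hlsc : ∀ i, lscS K (y i)) (hbdd : ∀ i, ‖y i‖ ≤ C) (hC : DCauchyN r (ddist K) y)
    {l : Bidual X} (hup : UpperConvOn r (ddist K) Set.univ y l) :
    (limsupN r fun i => ddist K (inclusionInDoubleDual ℝ X x) (y i)) ≤
      ddist K (inclusionInDoubleDual ℝ X x) l := by
  set M := ddist K (inclusionInDoubleDual ℝ X x) l
  refine ENNReal.le_of_forall_pos_le_add fun ε hε _ =>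
    le_of_forall_lt_imp_le_of_dense fun b hb => ?_
  have hε2 : (0 : ℝ) < ε / 2 := by positivity
  obtain ⟨c, γ₀, hc, hxc⟩ := exists_tail_close_far_of_lt_limsupN x hne htr hdir hlsc hbdd hC hε2
    (t := b.toReal) (by rwa [ENNReal.ofReal_toReal hb.ne_top])
  have hlc : ddist K l c ≤ ENNReal.ofReal (ε / 2) :=
    (hup c trivial).trans (liminfN_le_of_tail_le hdir hc)
  calc b = ENNReal.ofReal (b.toReal - ε / 2 + ε / 2) := by
        rw [sub_add_cancel, ENNReal.ofReal_toReal hb.ne_top]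
    _ ≤ ENNReal.ofReal (b.toReal - ε / 2) + ENNReal.ofReal (ε / 2) := ENNReal.ofReal_add_le
    _ ≤ M + ddist K l c + ENNReal.ofReal (ε / 2) := by
        gcongr
        exact hxc.trans (isDistance_ddist _ _ _)
    _ ≤ M + (ENNReal.ofReal (ε / 2) + ENNReal.ofReal (ε / 2)) := by
        rw [add_assoc]
        gcongr
    _ = M + ε := by
        rw [← ENNReal.ofReal_add hε2.le hε2.le, add_halves, ENNReal.ofReal_coe_nnreal]

end Finiteness

theorem stmt8_general (X : Type) [NormedAddCommGroup X] [NormedSpace ℝ X]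
    (K : Set X)
    (x : X)
    (ι : Type) (r : ι → ι → Prop) (y : ι → Bidual X) (l : Bidual X)
    (hne : Nonempty ι) (htr : TransRel r) (hdir : DirRel r)
    (hy : ∀ i, lscS K (y i) ∧ ‖y i‖ ≤ 1)
    (hC : DCauchyN r (ddist K) y)
    (hconv : BiConvOn r (ddist K) Set.univ y l) :
    TendstoN r (fun i => ddist K (NormedSpace.inclusionInDoubleDual ℝ X x) (y i))
      (ddist K (NormedSpace.inclusionInDoubleDual ℝ X x) l) :=
  tendstoN_of_le_liminfN_of_limsupN_le hdir (hconv.2 _ trivial)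
    (limsupN_ddist_le x hne htr hdir (fun i => (hy i).1) (fun i => (hy i).2) hC hconv.1)

/-- every `x` in the unit ball of `X` is `d`-finite in `X^{S1}`:
`d(x, y_λ) → d(x, y)` whenever `(y_λ)` is a `d`-Cauchy net in `X^{S1}` with
`y_λ →^◦_◦ y ∈ X^{S1}`. -/
theorem stmt8 (X : Type) [NormedAddCommGroup X] [NormedSpace ℝ X] [CompleteSpace X]
    (K : Set X) (hK : IsGoodCone X K)
    (x : X) (hx : ‖x‖ ≤ 1)
    (ι : Type) (r : ι → ι → Prop) (y : ι → Bidual X) (l : Bidual X)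
    (hne : Nonempty ι) (htr : TransRel r) (hdir : DirRel r)
    (hy : ∀ i, lscS K (y i) ∧ ‖y i‖ ≤ 1)
    (hC : DCauchyN r (ddist K) y)
    (hconv : BiConvOn r (ddist K) Set.univ y l)
    (hl : lscS K l ∧ ‖l‖ ≤ 1) :
    TendstoN r (fun i => ddist K (NormedSpace.inclusionInDoubleDual ℝ X x) (y i))
      (ddist K (NormedSpace.inclusionInDoubleDual ℝ X x) l) :=
  stmt8_general X K x ι r y l hne htr hdir hy hC hconv
end
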